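/- arXiv:1506.01292 — 2 statements merged into one kernel-verified Lean document; each statement's English description precedes it below -/
import Mathlib

section
/- Quantitative convergence of Riesz spectral projections: let X be a complex Banach space, c ∈ ℂ, r > 0, and let T and S be bounded linear operators on X such that for every z ∈ ℂ with |z − c| = r both z·I − T and z·I − S are invertible, with ‖(z·I − T)⁻¹‖ ≤ M and ‖(z·I − S)⁻¹‖ ≤ M′ for constants M, M′ > 0. Let E(T) = (2πi)⁻¹ ∮_{|z−c|=r} (z·I − T)⁻¹ dz and E(S) = (2πi)⁻¹ ∮_{|z−c|=r} (z·I − S)⁻¹ dz be the associated Riesz projections. Then ‖E(T) − E(S)‖ ≤ r · M · M′ · ‖T − S‖. -/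
/-!
On the circle both resolvents exist, and the second resolvent identity
`R_T(z) - R_S(z) = R_T(z) (T - S) R_S(z)` bounds their difference by `M M' ‖T - S‖`.
The resolvents are continuous on the resolvent set, so they are integrable over the circle and
the standard estimate `‖(2πi)⁻¹ ∮ f‖ ≤ r sup ‖f‖` for circle integrals gives the bound.
-/

open Metric spectrum

noncomputable def rieszProjection {A : Type*} [NormedRing A] [NormedAlgebra ℂ A] [CompleteSpace A]
    (a : A) (c : ℂ) (r : ℝ) : A :=
  (2 * Real.pi * Complex.I : ℂ)⁻¹ • ∮ z in C(c, r), resolvent a z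

theorem norm_resolvent_sub_resolvent_le {R A : Type*} [CommSemiring R] [NormedRing A]
    [Algebra R A] {a b : A} {z : R} (ha : z ∈ resolventSet R a) (hb : z ∈ resolventSet R b) :
    ‖resolvent a z - resolvent b z‖ ≤ ‖resolvent a z‖ * ‖a - b‖ * ‖resolvent b z‖ :=
  resolvent_sub_resolvent ha hb ▸ norm_mul₃_le

section NormedAlgebra

variable {A : Type*} [NormedRing A] [NormedAlgebra ℂ A] [CompleteSpace A]

theorem circleIntegrable_resolvent {a : A} {c : ℂ} {r : ℝ} (hr : 0 ≤ r)
    (ha : sphere c r ⊆ resolventSet ℂ a) : CircleIntegrable (resolvent a) c r :=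
  ContinuousOn.circleIntegrable hr fun _ hz =>
    (hasDerivAt_resolvent_const_left (ha hz)).continuousAt.continuousWithinAt

theorem norm_rieszProjection_sub_le {a b : A} {c : ℂ} {r M M' : ℝ} (hr : 0 ≤ r)
    (ha : sphere c r ⊆ resolventSet ℂ a) (hb : sphere c r ⊆ resolventSet ℂ b)
    (haM : ∀ z ∈ sphere c r, ‖resolvent a z‖ ≤ M)
    (hbM : ∀ z ∈ sphere c r, ‖resolvent b z‖ ≤ M') :
    ‖rieszProjection a c r - rieszProjection b c r‖ ≤ r * M * M' * ‖a - b‖ := by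
  have hdiff : ∀ z ∈ sphere c r, ‖resolvent a z - resolvent b z‖ ≤ M * M' * ‖a - b‖ := by
    intro z hz
    calc ‖resolvent a z - resolvent b z‖
        ≤ ‖resolvent a z‖ * ‖a - b‖ * ‖resolvent b z‖ :=
          norm_resolvent_sub_resolvent_le (ha hz) (hb hz)
      _ ≤ M * ‖a - b‖ * M' := by
          have hM : 0 ≤ M := (norm_nonneg _).trans (haM z hz)
          gcongr
          · exact haM z hz
          · exact hbM z hz
      _ = M * M' * ‖a - b‖ := by ring
  rw [rieszProjection, rieszProjection, ← smul_sub, ← circleIntegral.integral_sub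
    (circleIntegrable_resolvent hr ha) (circleIntegrable_resolvent hr hb)]
  calc _ ≤ r * (M * M' * ‖a - b‖) :=
        circleIntegral.norm_two_pi_i_inv_smul_integral_le_of_norm_le_const hr hdiff
    _ = r * M * M' * ‖a - b‖ := by ring

end NormedAlgebra

theorem mem_resolventSet_and_eq_resolvent_of_comp_eq_id {𝕜 X : Type*} [NormedField 𝕜]
    [NormedAddCommGroup X] [NormedSpace 𝕜 X] {T R : X →L[𝕜] X} {z : 𝕜}
    (h : (z • ContinuousLinearMap.id 𝕜 X - T) ∘L R = ContinuousLinearMap.id 𝕜 X ∧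
      R ∘L (z • ContinuousLinearMap.id 𝕜 X - T) = ContinuousLinearMap.id 𝕜 X) :
    z ∈ resolventSet 𝕜 T ∧ R = resolvent T z := by
  let u : (X →L[𝕜] X)ˣ := ⟨algebraMap 𝕜 (X →L[𝕜] X) z - T, R, h.1, h.2⟩
  exact ⟨u.isUnit, (Ring.inverse_unit u).symm⟩

theorem riesz_projection_diff_norm_le_general
    {X : Type*} [NormedAddCommGroup X] [NormedSpace ℂ X] [CompleteSpace X]
    (T S : X →L[ℂ] X) (c : ℂ) (r : ℝ) (hr : 0 < r)
    (M M' : ℝ)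
    (RT RS : ℂ → (X →L[ℂ] X))
    (hRT : ∀ z ∈ Metric.sphere c r,
      (z • ContinuousLinearMap.id ℂ X - T) ∘L RT z = ContinuousLinearMap.id ℂ X ∧
      RT z ∘L (z • ContinuousLinearMap.id ℂ X - T) = ContinuousLinearMap.id ℂ X)
    (hRTnorm : ∀ z ∈ Metric.sphere c r, ‖RT z‖ ≤ M)
    (hRS : ∀ z ∈ Metric.sphere c r,
      (z • ContinuousLinearMap.id ℂ X - S) ∘L RS z = ContinuousLinearMap.id ℂ X ∧
      RS z ∘L (z • ContinuousLinearMap.id ℂ X - S) = ContinuousLinearMap.id ℂ X)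
    (hRSnorm : ∀ z ∈ Metric.sphere c r, ‖RS z‖ ≤ M')
    (ET ES : X →L[ℂ] X)
    (hET : ET = (2 * Real.pi * Complex.I : ℂ)⁻¹ • ∮ z in C(c, r), RT z)
    (hES : ES = (2 * Real.pi * Complex.I : ℂ)⁻¹ • ∮ z in C(c, r), RS z) :
    ‖ET - ES‖ ≤ r * M * M' * ‖T - S‖ := by
  have hT := fun z hz => mem_resolventSet_and_eq_resolvent_of_comp_eq_id (hRT z hz)
  have hS := fun z hz => mem_resolventSet_and_eq_resolvent_of_comp_eq_id (hRS z hz)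
  have hET' : ET = rieszProjection T c r := by
    rw [hET, rieszProjection, circleIntegral.integral_congr hr.le fun z hz => (hT z hz).2]
  have hES' : ES = rieszProjection S c r := by
    rw [hES, rieszProjection, circleIntegral.integral_congr hr.le fun z hz => (hS z hz).2]
  rw [hET', hES']
  exact norm_rieszProjection_sub_le hr.le (fun z hz => (hT z hz).1) (fun z hz => (hS z hz).1)
    (fun z hz => (hT z hz).2 ▸ hRTnorm z hz) (fun z hz => (hS z hz).2 ▸ hRSnorm z hz)

/-- Quantitative convergence of Riesz spectral projections: if the circle
`|z - c| = r` lies in the resolvent sets of both `T` and `S`, with resolvents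
bounded by `M` and `M'` respectively, then the associated Riesz projections
satisfy `‖E(T) - E(S)‖ ≤ r·M·M'·‖T - S‖`. -/
theorem riesz_projection_diff_norm_le
    {X : Type*} [NormedAddCommGroup X] [NormedSpace ℂ X] [CompleteSpace X]
    (T S : X →L[ℂ] X) (c : ℂ) (r : ℝ) (hr : 0 < r)
    (M M' : ℝ) (hM : 0 < M) (hM' : 0 < M')
    (RT RS : ℂ → (X →L[ℂ] X))
    (hRT : ∀ z ∈ Metric.sphere c r,
      (z • ContinuousLinearMap.id ℂ X - T) ∘L RT z = ContinuousLinearMap.id ℂ X ∧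
      RT z ∘L (z • ContinuousLinearMap.id ℂ X - T) = ContinuousLinearMap.id ℂ X)
    (hRTnorm : ∀ z ∈ Metric.sphere c r, ‖RT z‖ ≤ M)
    (hRS : ∀ z ∈ Metric.sphere c r,
      (z • ContinuousLinearMap.id ℂ X - S) ∘L RS z = ContinuousLinearMap.id ℂ X ∧
      RS z ∘L (z • ContinuousLinearMap.id ℂ X - S) = ContinuousLinearMap.id ℂ X)
    (hRSnorm : ∀ z ∈ Metric.sphere c r, ‖RS z‖ ≤ M')
    (ET ES : X →L[ℂ] X)
    (hET : ET = (2 * Real.pi * Complex.I : ℂ)⁻¹ • ∮ z in C(c, r), RT z)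
    (hES : ES = (2 * Real.pi * Complex.I : ℂ)⁻¹ • ∮ z in C(c, r), RS z) :
    ‖ET - ES‖ ≤ r * M * M' * ‖T - S‖ :=
  riesz_projection_diff_norm_le_general T S c r hr M M' RT RS hRT hRTnorm hRS hRSnorm ET ES hET hES
end

section
/- Completeness of the spectrum for self-adjoint operators: let H be a nontrivial complex Hilbert space and let T and S be self-adjoint bounded linear operators on H. Then for every z ∈ σ(T) there exists w ∈ σ(S) with |z − w| ≤ ‖T − S‖; that is, dist(z, σ(S)) ≤ ‖T − S‖ for every z in the spectrum of T. (Applied with S = T_h and ‖T − T_h‖ → 0, every point of σ(T) is approximated by points of σ(T_h).) -/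
/-!
For normal `a` in a C⋆-algebra and `z ∉ σ(a)`, the continuous functional calculus gives
`‖(z - a)⁻¹‖ ≤ 1 / dist(z, σ(a))`. If `‖b - a‖ < dist(z, σ(a))`, then
`z - b = (z - a)(1 - (z - a)⁻¹(b - a))` is invertible by a Neumann series, so `z ∉ σ(b)`.
A self-adjoint `S` is normal, and `σ(S)` is compact, so the distance is attained.
-/

open Metric

theorem spectrum.notMem_of_norm_sub_mul_resolvent_lt_one {𝕜 A : Type*} [NormedField 𝕜]
    [NormedRing A] [NormedAlgebra 𝕜 A] [HasSummableGeomSeries A] {a b : A} {z : 𝕜}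
    (hz : z ∉ spectrum 𝕜 a) (h : ‖b - a‖ * ‖resolvent a z‖ < 1) :
    z ∉ spectrum 𝕜 b := by
  rw [spectrum.notMem_iff] at hz ⊢
  have hsmall : ‖resolvent a z * (b - a)‖ < 1 :=
    (norm_mul_le _ _).trans_lt (by rwa [mul_comm])
  have hfactor : algebraMap 𝕜 A z - b
      = (algebraMap 𝕜 A z - a) * (1 - resolvent a z * (b - a)) := by
    rw [mul_sub, mul_one, ← mul_assoc, resolvent, Ring.mul_inverse_cancel _ hz, one_mul]
    abel
  rw [hfactor]
  exact hz.mul (isUnit_one_sub_of_norm_lt_one hsmall)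

section CStarAlgebra

variable {A : Type*} [CStarAlgebra A] {a : A} [IsStarNormal a]

theorem resolvent_eq_cfc {z : ℂ} (hz : z ∉ spectrum ℂ a) :
    resolvent a z = cfc (fun w ↦ (z - w)⁻¹) a := by
  have hne : ∀ w ∈ spectrum ℂ a, z - w ≠ 0 := fun w hw h ↦ hz (sub_eq_zero.mp h ▸ hw)
  rw [cfc_inv (fun w ↦ z - w) a hne, cfc_sub _ _, cfc_const z a, cfc_id' ℂ a, resolvent]

theorem norm_resolvent_le_inv_infDist (z : ℂ) :
    ‖resolvent a z‖ ≤ (infDist z (spectrum ℂ a))⁻¹ := by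
  by_cases hz : z ∈ spectrum ℂ a
  · rw [spectrum.resolvent_zero_of_mem_spectrum hz, norm_zero]
    exact inv_nonneg.mpr infDist_nonneg
  nontriviality A
  have hpos : 0 < infDist z (spectrum ℂ a) :=
    (spectrum.isClosed a).notMem_iff_infDist_pos (spectrum.nonempty a) |>.mp hz
  rw [resolvent_eq_cfc hz]
  refine norm_cfc_le (by positivity) fun w hw ↦ ?_
  rw [norm_inv, ← dist_eq_norm]
  exact inv_anti₀ hpos (infDist_le_dist_of_mem hw)

theorem infDist_spectrum_le_norm_sub {b : A} {z : ℂ} (hz : z ∈ spectrum ℂ b) :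
    infDist z (spectrum ℂ a) ≤ ‖b - a‖ := by
  by_contra! hlt
  have hpos : 0 < infDist z (spectrum ℂ a) := (norm_nonneg _).trans_lt hlt
  have hza : z ∉ spectrum ℂ a := fun h ↦ hpos.ne' (infDist_zero_of_mem h)
  refine spectrum.notMem_of_norm_sub_mul_resolvent_lt_one hza ?_ hz
  calc ‖b - a‖ * ‖resolvent a z‖
      ≤ ‖b - a‖ * (infDist z (spectrum ℂ a))⁻¹ := by
        gcongr
        exact norm_resolvent_le_inv_infDist z
    _ < infDist z (spectrum ℂ a) * (infDist z (spectrum ℂ a))⁻¹ := by gcongr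
    _ = 1 := mul_inv_cancel₀ hpos.ne'

end CStarAlgebra

open scoped ComplexInnerProductSpace

theorem spectrum_dist_le_of_selfAdjoint_general
    {H : Type*} [NormedAddCommGroup H] [InnerProductSpace ℂ H] [CompleteSpace H]
    [Nontrivial H]
    (T S : H →L[ℂ] H)
    (hS : ∀ f g : H, ⟪S f, g⟫ = ⟪f, S g⟫) :
    ∀ z ∈ spectrum ℂ T, ∃ w ∈ spectrum ℂ S, ‖z - w‖ ≤ ‖T - S‖ := by
  intro z hz
  have : IsStarNormal S := (LinearMap.IsSymmetric.isSelfAdjoint hS).isStarNormal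
  obtain ⟨w, hw, hdist⟩ :=
    (spectrum.isCompact S).exists_infDist_eq_dist (spectrum.nonempty S) z
  refine ⟨w, hw, ?_⟩
  rw [← dist_eq_norm, ← hdist]
  exact infDist_spectrum_le_norm_sub hz

/-- Completeness of the spectrum for self-adjoint operators: each point of the
spectrum of `T` is within `‖T - S‖` of the spectrum of `S`. -/
theorem spectrum_dist_le_of_selfAdjoint
    {H : Type*} [NormedAddCommGroup H] [InnerProductSpace ℂ H] [CompleteSpace H]
    [Nontrivial H]
    (T S : H →L[ℂ] H)
    (hT : ∀ f g : H, ⟪T f, g⟫ = ⟪f, T g⟫)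
    (hS : ∀ f g : H, ⟪S f, g⟫ = ⟪f, S g⟫) :
    ∀ z ∈ spectrum ℂ T, ∃ w ∈ spectrum ℂ S, ‖z - w‖ ≤ ‖T - S‖ :=
  spectrum_dist_le_of_selfAdjoint_general T S hS
end
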